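/- Let p ∈ OFS with |p| > 1 and let k ≥ 1. The map α(i) = p_1 + i from G(R(p),k) to G(p, p_1 + k) induces an injective map from the set of connected components of G(R(p),k) into the set of connected components of G(p, p_1 + k); that is, if α(i) and α(j) lie in the same component of G(p, p_1 + k), then i and j lie in the same component of G(R(p), k). -/

import Mathlib

/-- `OFS p`: `p` is a strictly increasing nonempty finite sequence of positive integers. -/
def OFS (p : List ℕ) : Prop := p ≠ [] ∧ p.Pairwise (· < ·) ∧ ∀ x ∈ p, 0 < x

/-- The reduction operation `R`. -/
def R : List ℕ → List ℕ
  | [] => []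
  | [a] => [a]
  | a :: b :: rest => (((b :: rest).map (fun x => x - a)).insert a).mergeSort (· ≤ ·)

/-- `max(p)` -/
def maxL (p : List ℕ) : ℕ := p.foldr max 0

/-- `gcd(p)` -/
def gcdL (p : List ℕ) : ℕ := p.foldr Nat.gcd 0

/-- Fuel-based auxiliary for `f`; `maxL p + 1` fuel always suffices since
`maxL` strictly decreases under `R` for lists of length `> 1`. -/
def faux : ℕ → List ℕ → ℕ
  | _, [] => 0
  | _, [a] => a
  | 0, _ => 0
  | fuel+1, p => p.headI + faux fuel (R p)

/-- The function `f` of Castelli–Mignosi–Restivo: `f p = p₁` if `|p| = 1`,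
and `f p = p₁ + f (R p)` otherwise. -/
def f (p : List ℕ) : ℕ := faux (maxL p + 1) p

/-- The function `fw` of Tijdeman–Zamboni. -/
def fw (p : List ℕ) : ℕ :=
  if h : 1 < p.length ∧ gcdL p.dropLast = gcdL p ∧ f p.dropLast ≤ maxL p
  then fw p.dropLast
  else f p
termination_by p.length
decreasing_by
  simp only [List.length_dropLast]
  omega

/-- The Fine–Wilf graph `G(p,k)` on vertex set `{1,…,k}` (represented by `Fin k`,
with `v : Fin k` standing for the integer `v+1`); `i` and `j` are adjacent iff
`|i - j|` is an entry of `p`. -/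
def G (p : List ℕ) (k : ℕ) : SimpleGraph (Fin k) where
  Adj i j := i ≠ j ∧ (((j : ℕ) - (i : ℕ)) ∈ p ∨ ((i : ℕ) - (j : ℕ)) ∈ p)
  symm := by
    constructor
    intro i j h
    exact ⟨h.1.symm, h.2.symm⟩
  loopless := by
    constructor
    intro i h
    exact h.1 rfl

/-- `p` is trim. -/
def Trim (p : List ℕ) : Prop :=
  p.length = 1 ∨ (1 < p.length ∧
    (gcdL p ≠ gcdL p.dropLast ∨ (gcdL p = gcdL p.dropLast ∧ maxL p < f p.dropLast)))

lemma mem_R_iff (a b : ℕ) (rest : List ℕ) (x : ℕ) :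
    x ∈ R (a :: b :: rest) ↔ x = a ∨ ∃ d ∈ b :: rest, d - a = x := by
  show x ∈ (((b :: rest).map (fun x => x - a)).insert a).mergeSort (· ≤ ·) ↔ _
  rw [List.mem_mergeSort, List.mem_insert_iff, List.mem_map]

lemma adj_of_mem (r : List ℕ) (k : ℕ) (m n : Fin k) (c : ℕ) (hc : c ∈ r) (hc0 : 0 < c)
    (h : (n : ℕ) = m + c) : (G r k).Adj m n := by
  refine ⟨?_, Or.inl ?_⟩
  · intro he; rw [he] at h; omega
  · have : (n : ℕ) - (m : ℕ) = c := by omega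
    rwa [this]

/-- Key edge lemma: an edge of `G p (p₁+k)` with endpoints `u < v` projects to a
short path in `G (R p) k`. -/
lemma step_lemma (p : List ℕ) (hp : OFS p) (hl : 1 < p.length) (k : ℕ)
    (u v : ℕ) (hu : u < p.headI + k) (hv : v < p.headI + k)
    (huv : u < v) (hmem : v - u ∈ p) :
    (if p.headI ≤ u then u - p.headI else u) < k ∧
    (if p.headI ≤ v then v - p.headI else v) < k ∧
    ∀ (m n : Fin k), (m : ℕ) = (if p.headI ≤ u then u - p.headI else u) →
      (n : ℕ) = (if p.headI ≤ v then v - p.headI else v) →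
      (G (R p) k).Reachable m n := by
  obtain ⟨a, b, rest, rfl⟩ : ∃ a b rest, p = a :: b :: rest := by
    match p, hl with
    | a :: b :: rest, _ => exact ⟨a, b, rest, rfl⟩
  simp only [List.headI_cons] at hu hv
  rw [List.headI_cons]
  have hsort := hp.2.1
  rw [List.pairwise_cons] at hsort
  have hlt : ∀ d ∈ b :: rest, a < d := hsort.1
  have hpos : 0 < a := hp.2.2 a (by simp)
  have haR : a ∈ R (a :: b :: rest) := (mem_R_iff a b rest a).2 (Or.inl rfl)
  -- v - u = a or v - u ∈ b :: rest
  rcases List.mem_cons.mp hmem with hd | hd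
  · -- difference is a, so v = u + a
    have hva : v = u + a := by omega
    by_cases hau : a ≤ u
    · -- π u = u - a, π v = u, edge with difference a
      have h1 : u - a < k := by omega
      have h2 : u < k := by omega
      rw [if_pos hau, if_pos (by omega : a ≤ v)]
      refine ⟨h1, by omega, ?_⟩
      intro m n hm hn
      exact (adj_of_mem _ _ m n a haR hpos (by omega)).reachable
    · -- π u = u = π v
      have h2 : u < k := by omega
      rw [if_neg hau, if_pos (by omega : a ≤ v)]
      refine ⟨h2, by omega, ?_⟩
      intro m n hm hn
      have : m = n := Fin.ext (by omega)
      rw [this]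
  · -- difference d ∈ b :: rest, a < d
    have had : a < v - u := hlt _ hd
    have hdR : (v - u) - a ∈ R (a :: b :: rest) :=
      (mem_R_iff a b rest _).2 (Or.inr ⟨v - u, hd, rfl⟩)
    by_cases hau : a ≤ u
    · -- π u = u - a, π v = v - a; path via w = v - 2a
      rw [if_pos hau, if_pos (by omega : a ≤ v)]
      refine ⟨by omega, by omega, ?_⟩
      intro m n hm hn
      have hwlt : v - 2 * a < k := by omega
      set w : Fin k := ⟨v - 2 * a, hwlt⟩ with hw
      have e1 : (G (R (a :: b :: rest)) k).Adj m w :=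
        adj_of_mem _ _ m w ((v - u) - a) hdR (by omega) (by simp [hw]; omega)
      have e2 : (G (R (a :: b :: rest)) k).Adj w n :=
        adj_of_mem _ _ w n a haR hpos (by simp [hw]; omega)
      exact e1.reachable.trans e2.reachable
    · -- π u = u; direct edge with difference (v-u) - a
      rw [if_neg hau, if_pos (by omega : a ≤ v)]
      refine ⟨by omega, by omega, ?_⟩
      intro m n hm hn
      exact (adj_of_mem _ _ m n ((v - u) - a) hdR (by omega) (by omega)).reachable

lemma zero_not_mem (p : List ℕ) (hp : OFS p) : (0 : ℕ) ∉ p := by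
  intro h0
  exact absurd (hp.2.2 0 h0) (by omega)

lemma walk_lemma (p : List ℕ) (hp : OFS p) (hl : 1 < p.length) (k : ℕ)
    (j : Fin k) (t : Fin (p.headI + k)) (ht : (t : ℕ) = p.headI + (j : ℕ)) :
    ∀ (x : Fin (p.headI + k)) (w : (G p (p.headI + k)).Walk x t)
      (hx : (if p.headI ≤ (x : ℕ) then (x : ℕ) - p.headI else (x : ℕ)) < k),
      (G (R p) k).Reachable ⟨_, hx⟩ j := by
  intro x w
  induction w with
  | nil =>
    intro hx
    have : (⟨_, hx⟩ : Fin k) = j := Fin.ext (by simp only []; rw [ht]; split <;> omega)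
    rw [this]
  | @cons x y _ hadj w ih =>
    intro hx
    have hxy := hadj.1
    have hxyv : (x : ℕ) ≠ (y : ℕ) := fun h => hxy (Fin.ext h)
    rcases lt_or_gt_of_ne hxyv with hlt' | hlt'
    · have hmem : (y : ℕ) - (x : ℕ) ∈ p := by
        rcases hadj.2 with h | h
        · exact h
        · exfalso; have : (x : ℕ) - (y : ℕ) = 0 := by omega
          rw [this] at h; exact zero_not_mem p hp h
      obtain ⟨h1, h2, h3⟩ := step_lemma p hp hl k x y x.isLt y.isLt hlt' hmem
      exact (h3 ⟨_, hx⟩ ⟨_, h2⟩ rfl rfl).trans (ih ht h2)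
    · have hmem : (x : ℕ) - (y : ℕ) ∈ p := by
        rcases hadj.2 with h | h
        · exfalso; have : (y : ℕ) - (x : ℕ) = 0 := by omega
          rw [this] at h; exact zero_not_mem p hp h
        · exact h
      obtain ⟨h1, h2, h3⟩ := step_lemma p hp hl k y x y.isLt x.isLt hlt' hmem
      exact ((h3 ⟨_, h1⟩ ⟨_, hx⟩ rfl rfl).symm).trans (ih ht h1)

theorem alpha_injective_on_components (p : List ℕ) (hp : OFS p) (hl : 1 < p.length)
    (k : ℕ) (hk : 1 ≤ k) (i j : Fin k)
    (h : (G p (p.headI + k)).Reachable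
      ⟨p.headI + (i : ℕ), by have := i.isLt; omega⟩
      ⟨p.headI + (j : ℕ), by have := j.isLt; omega⟩) :
    (G (R p) k).Reachable i j := by
  obtain ⟨w⟩ := h
  have hx : (if p.headI ≤ ((⟨p.headI + (i : ℕ), by have := i.isLt; omega⟩ : Fin (p.headI + k)) : ℕ)
      then ((⟨p.headI + (i : ℕ), by have := i.isLt; omega⟩ : Fin (p.headI + k)) : ℕ) - p.headI
      else ((⟨p.headI + (i : ℕ), by have := i.isLt; omega⟩ : Fin (p.headI + k)) : ℕ)) < k := by
    simp only []
    split <;> [omega; omega]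
  have := walk_lemma p hp hl k j _ rfl _ w hx
  have heq : (⟨_, hx⟩ : Fin k) = i := Fin.ext (by simp only []; split <;> omega)
  rwa [heq] at this
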